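/- If G is a K_{2,3}-induced-minor-free graph, then the pmc-independence number of G is at most 3. -/

import Mathlib

open SimpleGraph

/-! ## Common definitions -/

variable {V : Type} {W : Type}

/-- `G.HasInducedMinor H` : `H` is an induced minor of `G`, witnessed by an induced minor
model: pairwise disjoint nonempty connected branch sets `X w ⊆ V(G)` such that for distinct
`w₁ w₂` there is an edge of `G` between `X w₁` and `X w₂` iff `w₁w₂ ∈ E(H)`. -/
def SimpleGraph.HasInducedMinor (G : SimpleGraph V) (H : SimpleGraph W) : Prop :=
  ∃ X : W → Set V,
    (∀ w, (G.induce (X w)).Connected) ∧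
    (Pairwise fun w₁ w₂ => Disjoint (X w₁) (X w₂)) ∧
    ∀ w₁ w₂, w₁ ≠ w₂ →
      (H.Adj w₁ w₂ ↔ ∃ v₁ ∈ X w₁, ∃ v₂ ∈ X w₂, G.Adj v₁ v₂)

/-- `G.HasMinor H` : `H` is a minor of `G`, witnessed by a minor model. -/
def SimpleGraph.HasMinor (G : SimpleGraph V) (H : SimpleGraph W) : Prop :=
  ∃ X : W → Set V,
    (∀ w, (G.induce (X w)).Connected) ∧
    (Pairwise fun w₁ w₂ => Disjoint (X w₁) (X w₂)) ∧
    ∀ w₁ w₂, H.Adj w₁ w₂ → ∃ v₁ ∈ X w₁, ∃ v₂ ∈ X w₂, G.Adj v₁ v₂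

/-- `S` is a `u,v`-separator in `G` : `u, v ∉ S` and every walk from `u` to `v` in `G`
meets `S` (i.e. `u` and `v` lie in different components of `G - S`). -/
def SimpleGraph.IsSeparator (G : SimpleGraph V) (u v : V) (S : Set V) : Prop :=
  u ∉ S ∧ v ∉ S ∧ ∀ p : G.Walk u v, ∃ x ∈ p.support, x ∈ S

/-- A minimal separator of `G`: an inclusion-minimal `u,v`-separator for some
non-adjacent pair of distinct vertices `u, v`. -/
def SimpleGraph.IsMinimalSeparator (G : SimpleGraph V) (S : Set V) : Prop :=
  ∃ u v : V, u ≠ v ∧ ¬ G.Adj u v ∧ G.IsSeparator u v S ∧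
    ∀ S' ⊂ S, ¬ G.IsSeparator u v S'

/-- The independence number of the subgraph of `G` induced by the set `A`:
the largest size of a finite set of pairwise non-adjacent vertices inside `A`. -/
noncomputable def SimpleGraph.indepNumOn (G : SimpleGraph V) (A : Set V) : ℕ :=
  sSup {n | ∃ s : Finset V, ↑s ⊆ A ∧ (∀ u ∈ s, ∀ v ∈ s, u ≠ v → ¬ G.Adj u v) ∧ s.card = n}

/-- A tree decomposition of a graph `G`. -/
structure SimpleGraph.TreeDecomp (G : SimpleGraph V) where
  ι : Type
  tree : SimpleGraph ι
  isTree : tree.IsTree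
  bag : ι → Set V
  bags_cover_vertices : ∀ v : V, ∃ t, v ∈ bag t
  bags_cover_edges : ∀ ⦃u v : V⦄, G.Adj u v → ∃ t, u ∈ bag t ∧ v ∈ bag t
  bags_connected : ∀ v : V, (tree.induce {t | v ∈ bag t}).Connected

/-- The independence number of a tree decomposition: the maximum, over all bags,
of the independence number of the subgraph induced by the bag. -/
noncomputable def SimpleGraph.TreeDecomp.indepNum {G : SimpleGraph V} (D : G.TreeDecomp) : ℕ∞ :=
  ⨆ t : D.ι, (G.indepNumOn (D.bag t) : ℕ∞)

/-- The tree-independence number of `G`: the minimum independence number of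
a tree decomposition of `G`. -/
noncomputable def SimpleGraph.treeIndepNum (G : SimpleGraph V) : ℕ∞ :=
  ⨅ D : G.TreeDecomp, D.indepNum

/-- The width of a tree decomposition: the maximum of `|X_t| - 1` over all bags. -/
noncomputable def SimpleGraph.TreeDecomp.width {G : SimpleGraph V} (D : G.TreeDecomp) : ℕ∞ :=
  ⨆ t : D.ι, (((D.bag t).ncard - 1 : ℕ) : ℕ∞)

/-- The treewidth of `G`. -/
noncomputable def SimpleGraph.treewidth (G : SimpleGraph V) : ℕ∞ :=
  ⨅ D : G.TreeDecomp, D.width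

/-- A graph is chordal if it has no induced cycle of length at least `4`. -/
def SimpleGraph.IsChordal (G : SimpleGraph V) : Prop :=
  ∀ n : ℕ, 4 ≤ n → ∀ A : Set V, ¬ Nonempty (cycleGraph n ≃g G.induce A)

/-- `H` is a minimal triangulation of `G`: a chordal supergraph of `G` on the same
vertex set such that no chordal graph lies strictly between `G` and `H`. -/
def SimpleGraph.IsMinimalTriangulation (G H : SimpleGraph V) : Prop :=
  G ≤ H ∧ H.IsChordal ∧ ∀ H' : SimpleGraph V, G ≤ H' → H'.IsChordal → ¬ H' < H

/-- `X` is a potential maximal clique of `G`: a maximal clique in some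
minimal triangulation of `G`. -/
def SimpleGraph.IsPotentialMaxClique (G : SimpleGraph V) (X : Set V) : Prop :=
  ∃ H : SimpleGraph V, G.IsMinimalTriangulation H ∧
    H.IsClique X ∧ ∀ Y : Set V, H.IsClique Y → X ⊆ Y → Y = X

/-- The pmc-independence number of `G`: the maximum independence number of a subgraph
of `G` induced by a potential maximal clique of `G`. -/
noncomputable def SimpleGraph.pmcIndepNum (G : SimpleGraph V) : ℕ :=
  sSup {n | ∃ X : Set V, G.IsPotentialMaxClique X ∧ n = G.indepNumOn X}

/-- The maximum size of a minimal separator of `G` (`0` if `G` has no minimal separator). -/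
noncomputable def SimpleGraph.maxMinimalSeparatorSize (G : SimpleGraph V) : ℕ :=
  sSup {n | ∃ S : Set V, G.IsMinimalSeparator S ∧ n = S.ncard}

/-- `G` is `k`-connected: `G` has at least `k+1` vertices and removing any set of fewer
than `k` vertices leaves a connected graph. -/
def SimpleGraph.IsKConnected (G : SimpleGraph V) [Fintype V] (k : ℕ) : Prop :=
  k + 1 ≤ Fintype.card V ∧
    ∀ X : Finset V, X.card < k → (G.induce ((↑X : Set V)ᶜ)).Connected

/-- The `n`-wheel `W_n`: the cycle `C_n` together with a universal vertex. -/
def wheelGraph (n : ℕ) : SimpleGraph (Option (Fin n)) :=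
  SimpleGraph.fromRel (fun a b =>
    a = none ∨ ∃ i j : Fin n, a = some i ∧ b = some j ∧ (cycleGraph n).Adj i j)

/-- `K₅⁻`: the complete graph on `5` vertices minus an edge. -/
def K5minus : SimpleGraph (Fin 5) := (completeGraph (Fin 5)).deleteEdges {s(0, 1)}

/-- The complete bipartite graph `K_{2,q}`. -/
abbrev K2q (q : ℕ) : SimpleGraph (Fin 2 ⊕ Fin q) := completeBipartiteGraph (Fin 2) (Fin q)

/-- The Hadwiger number of `G`: the largest `p` such that `K_p` is a minor of `G`. -/
noncomputable def SimpleGraph.hadwigerNumber (G : SimpleGraph V) : ℕ :=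
  sSup {p | G.HasMinor (completeGraph (Fin p))}


/-!
Let `X` be a maximal clique of a minimal triangulation `H` of `G`. Two properties of the
components of `G - X` drive the proof. Any two non-adjacent vertices of `X` have neighbours in a
common component: otherwise `X \ {u, v}` separates them in `G`, and deleting the edges of `H`
across this separator leaves a smaller chordal supergraph of `G`. No component sees all of `X`:
a connected set dominating a maximal clique of a chordal graph would close up into a chordless
cycle.

Now take four pairwise non-adjacent vertices of `X`. If some component `C` sees three of them,
a vertex `x ∈ X` missing `C`, together with the components seen by `x`, forms with `C` the two
left branch sets of a `K_{2,3}` induced minor whose right branch sets are the three vertices.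
Otherwise the components `C_ab, C_ac, C_bc, C_ad, C_bd` seeing the pairs are distinct, and
`{a}, {b}` and `C_ab`, `{c} ∪ C_ac ∪ C_bc`, `{d} ∪ C_ad ∪ C_bd` are the branch sets.
-/

namespace SimpleGraph

open Walk

variable {G H : SimpleGraph V}

lemma cycleGraph_adj_iff_val {n : ℕ} {i j : Fin (n + 2)} :
    (cycleGraph (n + 2)).Adj i j ↔ i.val + 1 = j.val ∨ j.val + 1 = i.val ∨
      (i.val = 0 ∧ j.val = n + 1) ∨ (j.val = 0 ∧ i.val = n + 1) := by
  have hi := i.is_lt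
  have hj := j.is_lt
  rw [cycleGraph_adj']
  rcases lt_trichotomy i j with h | rfl | h
  · rw [Fin.coe_sub_iff_lt.mpr h, Fin.coe_sub_iff_le.mpr h.le]
    omega
  · simp only [sub_self, Fin.val_zero]
    omega
  · rw [Fin.coe_sub_iff_le.mpr h.le, Fin.coe_sub_iff_lt.mpr h]
    omega

open Fin.NatCast Fin.CommRing in
lemma cycleGraph_exists_walk_add {n : ℕ} {S : Set (Fin (n + 2))} (x : Fin (n + 2)) (t : ℕ)
    (h : ∀ s ≤ t, x + (s : ℕ) ∉ S) :
    ∃ p : (cycleGraph (n + 2)).Walk x (x + (t : ℕ)), ∀ k ∈ p.support, k ∉ S := by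
  induction t with
  | zero => exact ⟨Walk.nil.copy rfl (by simp), by simpa using h 0 le_rfl⟩
  | succ t ih =>
    obtain ⟨p, hp⟩ := ih fun s hs => h s (by omega)
    have hadj : (cycleGraph (n + 2)).Adj (x + (t : ℕ)) (x + (t + 1 : ℕ)) :=
      cycleGraph_adj.mpr (Or.inr (by push_cast; ring))
    refine ⟨p.concat hadj, fun k hk => ?_⟩
    rw [support_concat, List.mem_append, List.mem_singleton] at hk
    exact hk.elim (hp k) fun hk => hk ▸ h _ le_rfl

open Fin.NatCast Fin.CommRing in
/-- If both arcs of the cycle from `i` to `j` meet `S`, the two hits are at cyclic distance at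
least two in both directions, so they are not adjacent. -/
lemma cycleGraph_exists_walk_avoiding_clique {n : ℕ} {S : Set (Fin (n + 2))}
    (hS : (cycleGraph (n + 2)).IsClique S) {i j : Fin (n + 2)} (hi : i ∉ S) (hj : j ∉ S) :
    ∃ p : (cycleGraph (n + 2)).Walk i j, ∀ k ∈ p.support, k ∉ S := by
  have hsub : ∀ x y : Fin (n + 2), x + ((y - x).val : ℕ) = y := fun x y => by simp
  by_cases h₁ : ∀ s ≤ (j - i).val, i + (s : ℕ) ∉ S
  · obtain ⟨p, hp⟩ := cycleGraph_exists_walk_add i _ h₁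
    exact ⟨p.copy rfl (hsub i j), by simpa using hp⟩
  by_cases h₂ : ∀ s ≤ (i - j).val, j + (s : ℕ) ∉ S
  · obtain ⟨p, hp⟩ := cycleGraph_exists_walk_add j _ h₂
    exact ⟨(p.copy rfl (hsub j i)).reverse, by simpa using hp⟩
  push Not at h₁ h₂
  obtain ⟨t₁, ht₁, hs₁⟩ := h₁
  obtain ⟨t₂, ht₂, hs₂⟩ := h₂
  set d := (j - i).val
  set e := (i - j).val
  have ht₁d : 0 < t₁ ∧ t₁ < d := by
    refine ⟨Nat.pos_of_ne_zero ?_, lt_of_le_of_ne ht₁ ?_⟩ <;> rintro rfl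
    exacts [hi (by simpa using hs₁), hj (hsub i j ▸ hs₁)]
  have ht₂e : 0 < t₂ ∧ t₂ < e := by
    refine ⟨Nat.pos_of_ne_zero ?_, lt_of_le_of_ne ht₂ ?_⟩ <;> rintro rfl
    exacts [hj (by simpa using hs₂), hi (hsub j i ▸ hs₂)]
  have hde : d + e = n + 2 := by
    rcases lt_trichotomy i j with h | rfl | h
    · simp only [d, e, Fin.coe_sub_iff_le.mpr h.le, Fin.coe_sub_iff_lt.mpr h]; omega
    · simp [d] at ht₁d
    · simp only [d, e, Fin.coe_sub_iff_lt.mpr h, Fin.coe_sub_iff_le.mpr h.le]; omega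
  have hdiff₁ : (j + (t₂ : ℕ)) - (i + (t₁ : ℕ)) = ((d + t₂ - t₁ : ℕ) : Fin (n + 2)) := by
    rw [Nat.cast_sub (by omega), Nat.cast_add]
    nth_rewrite 1 [← hsub i j]
    ring
  have hdiff₂ : (i + (t₁ : ℕ)) - (j + (t₂ : ℕ)) = ((e + t₁ - t₂ : ℕ) : Fin (n + 2)) := by
    rw [Nat.cast_sub (by omega), Nat.cast_add]
    nth_rewrite 1 [← hsub j i]
    ring
  have hne : i + (t₁ : ℕ) ≠ j + (t₂ : ℕ) := fun h => by
    have := congrArg Fin.val hdiff₁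
    rw [h, sub_self, Fin.val_natCast, Nat.mod_eq_of_lt (by omega)] at this
    simp only [Fin.val_zero] at this
    omega
  have := cycleGraph_adj'.mp (hS hs₁ hs₂ hne)
  rw [hdiff₁, hdiff₂, Fin.val_natCast, Fin.val_natCast, Nat.mod_eq_of_lt (by omega),
    Nat.mod_eq_of_lt (by omega)] at this
  omega

lemma isChordal_iff_isEmpty_embedding :
    H.IsChordal ↔ ∀ n, 4 ≤ n → IsEmpty (cycleGraph n ↪g H) :=
  forall₂_congr fun _ _ =>
    ⟨fun h => ⟨fun f => h _ ⟨f.isoInduceRange⟩⟩,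
      fun h A ⟨e⟩ => h.false ((Embedding.induce A).comp e.toEmbedding)⟩

theorem IsChordal.exists_chord (hH : H.IsChordal) {u v : V} {p : H.Walk u v} (hp : p.IsPath)
    (hvu : H.Adj v u) (hlen : 3 ≤ p.length) :
    ∃ i j, i + 1 < j ∧ j ≤ p.length ∧ (i = 0 → j < p.length) ∧
      H.Adj (p.getVert i) (p.getVert j) := by
  by_contra! hno
  obtain ⟨m, hm⟩ : ∃ m, p.length = m + 1 := ⟨p.length - 1, by omega⟩
  have hadj : ∀ i j, i < j → j ≤ p.length →
      (H.Adj (p.getVert i) (p.getVert j) ↔ i + 1 = j ∨ (i = 0 ∧ j = p.length)) := by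
    refine fun i j hij hj => ⟨fun h => ?_, ?_⟩
    · by_contra! h'
      exact hno i j (by omega) hj (by omega) h
    · rintro (rfl | ⟨rfl, rfl⟩)
      · exact p.adj_getVert_succ (by omega)
      · simpa using hvu.symm
  have hcycle : ∀ i j : Fin (m + 2),
      H.Adj (p.getVert i) (p.getVert j) ↔ (cycleGraph (m + 2)).Adj i j := by
    intro i j
    have hi := i.is_lt
    have hj := j.is_lt
    rw [cycleGraph_adj_iff_val]
    rcases lt_trichotomy i.val j.val with h | h | h
    · rw [hadj _ _ h (by omega)]; omega
    · obtain rfl := Fin.ext h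
      simp only [H.loopless.irrefl, false_iff]
      omega
    · rw [H.adj_comm, hadj _ _ h (by omega)]; omega
  let f : cycleGraph (m + 2) ↪g H :=
    ⟨⟨fun i => p.getVert i,
      fun i j h => Fin.ext <| hp.getVert_injOn (show (i : ℕ) ≤ p.length by omega)
        (show (j : ℕ) ≤ p.length by omega) h⟩, hcycle _ _⟩
  exact (isChordal_iff_isEmpty_embedding.mp hH (m + 2) (by omega)).false f

/-- The path `u, q, v` closes up through the edge `vu` into a cycle; a chord of it
shortcuts `q`. -/
theorem IsChordal.exists_shorter_walk (hH : H.IsChordal) {u v a b : V} (huv : H.Adj u v)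
    (hua : H.Adj u a) (hbv : H.Adj b v) {q : H.Walk a b} (hq : q.IsPath) (hq0 : q.length ≠ 0)
    (hu : u ∉ q.support) (hv : v ∉ q.support) :
    ∃ (a' b' : V) (q' : H.Walk a' b'), q'.length < q.length ∧ H.Adj u a' ∧ H.Adj b' v ∧
      ∀ y ∈ q'.support, y ∈ q.support := by
  set P := Walk.cons hua (q.concat hbv) with hPdef
  have hP : P.IsPath := by
    refine (Walk.cons_isPath_iff _ _).mpr ⟨hq.concat hv hbv, ?_⟩
    simp [support_concat, hu, huv.ne]
  have hPlen : P.length = q.length + 2 := by simp [hPdef]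
  have hPq : ∀ k ≤ q.length, P.getVert (k + 1) = q.getVert k := fun k hk => by
    simp [hPdef, concat_eq_append, getVert_append', hk]
  have hPend : P.getVert (q.length + 2) = v := hPlen ▸ P.getVert_length
  obtain ⟨i, j, hij, hj, hi0, hadj⟩ := hH.exists_chord hP huv.symm (by omega)
  rw [hPlen] at hj hi0
  obtain ⟨j, rfl⟩ : ∃ j', j = j' + 1 := ⟨j - 1, by omega⟩
  rcases Nat.eq_zero_or_pos i with rfl | hi
  · rw [getVert_zero, hPq _ (by omega)] at hadj
    refine ⟨_, _, q.drop j, by simp; omega, hadj, hbv, fun y hy => ?_⟩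
    simp only [drop_support_eq_support_drop_min] at hy
    exact List.mem_of_mem_drop hy
  obtain ⟨i, rfl⟩ : ∃ i', i = i' + 1 := ⟨i - 1, by omega⟩
  have htake : ∀ y ∈ (q.take i).support, y ∈ q.support := fun y hy => by
    rw [support_take] at hy
    exact List.mem_of_mem_take hy
  rcases eq_or_lt_of_le hj with hj | hj
  · obtain rfl : j = q.length + 1 := by omega
    rw [hPq _ (by omega), hPend] at hadj
    exact ⟨_, _, q.take i, by simp; omega, hua, hadj, htake⟩
  · rw [hPq _ (by omega), hPq _ (by omega)] at hadj
    refine ⟨_, _, (q.take i).append (Walk.cons hadj (q.drop j)), by simp; omega, hua, hbv,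
      fun y hy => ?_⟩
    simp only [support_append, support_cons, List.tail_cons, List.mem_append,
      drop_support_eq_support_drop_min] at hy
    exact hy.elim (htake y) List.mem_of_mem_drop

theorem IsChordal.exists_adj_adj_of_walk (hH : H.IsChordal) {u v a b : V} {D : Set V}
    (huv : H.Adj u v) (hu : u ∉ D) (hv : v ∉ D) (hua : H.Adj u a) (hbv : H.Adj b v)
    (q : H.Walk a b) (hq : ∀ y ∈ q.support, y ∈ D) : ∃ d ∈ D, H.Adj u d ∧ H.Adj d v := by
  induction hn : q.length using Nat.strong_induction_on generalizing a b with
  | _ n ih =>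
  classical
  by_cases hpath : q.IsPath
  swap
  · refine ih _ (lt_of_le_of_ne (hn ▸ q.length_bypass_le_length) fun h => ?_) hua hbv q.bypass
      (fun y hy => hq y (q.support_bypass_subset_support hy)) rfl
    exact hpath (q.bypass_eq_self_of_length_le_length_bypass (by omega) ▸ q.bypass_isPath)
  rcases Nat.eq_zero_or_pos n with h0 | hpos
  · obtain rfl := Walk.eq_of_length_eq_zero (hn.trans h0)
    exact ⟨a, hq a q.start_mem_support, hua, hbv⟩
  obtain ⟨a', b', q', hlt, ha', hb', hq'⟩ := hH.exists_shorter_walk huv hua hbv hpath (by omega)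
    (fun h => hu (hq u h)) (fun h => hv (hq v h))
  exact ih _ (hn ▸ hlt) ha' hb' q' (fun y hy => hq y (hq' y hy)) rfl

/-- For a shortest walk dominating `X`, each end is the only neighbour on the walk of some vertex
of `X` (otherwise drop that end). These two vertices are adjacent, and their common neighbour on
the walk given by `exists_adj_adj_of_walk` would have to be both ends. -/
theorem IsChordal.exists_forall_not_adj_of_maximal (hH : H.IsChordal) {X : Set V}
    (hX : Maximal H.IsClique X) {a b : V} (p : H.Walk a b) (hp : ∀ y ∈ p.support, y ∉ X) :
    ∃ x ∈ X, ∀ y ∈ p.support, ¬ H.Adj x y := by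
  induction hn : p.length using Nat.strong_induction_on generalizing a b with
  | _ n ih =>
  by_contra! hdom
  by_cases hnil : p.Nil
  · have hadj : ∀ x ∈ X, H.Adj x a := fun x hx => by
      obtain ⟨y, hy, h⟩ := hdom x hx
      rw [nil_iff_support_eq.mp hnil, List.mem_singleton] at hy
      exact hy ▸ h
    exact hp a p.start_mem_support <| hX.mem_of_prop_insert <|
      isClique_insert.mpr ⟨hX.prop, fun x hx _ => (hadj x hx).symm⟩
  have hend : ∀ {a' b'} (p' : H.Walk a' b'), ¬ p'.Nil → p'.length = n →
      (∀ y, y ∈ p'.support ↔ y ∈ p.support) →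
      ∃ x ∈ X, H.Adj x a' ∧ ∀ y ∈ p'.tail.support, ¬ H.Adj x y := by
    intro a' b' p' hnil' hlen' hsupp
    have htail : ∀ y ∈ p'.tail.support, y ∈ p.support := fun y hy =>
      (hsupp y).mp (by rw [← cons_support_tail hnil']; exact List.mem_cons_of_mem _ hy)
    obtain ⟨x, hx, hpriv⟩ := ih _ (by rw [← hlen', ← length_tail_add_one hnil']; omega)
      p'.tail (fun y hy => hp y (htail y hy)) rfl
    obtain ⟨y, hy, hxy⟩ := hdom x hx
    rw [← hsupp, ← cons_support_tail hnil', List.mem_cons] at hy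
    rcases hy with rfl | hy
    · exact ⟨x, hx, hxy, hpriv⟩
    · exact absurd hxy (hpriv y hy)
  obtain ⟨x₁, hx₁, hx₁a, hx₁p⟩ := hend p hnil hn fun _ => Iff.rfl
  obtain ⟨x₂, hx₂, hx₂b, hx₂p⟩ := hend p.reverse (by simpa using hnil) (by simpa using hn)
    fun _ => by simp
  have hb : b ∈ p.tail.support := p.tail.end_mem_support
  have ha : a ∈ p.reverse.tail.support := p.reverse.tail.end_mem_support
  have hx₁₂ : H.Adj x₁ x₂ := hX.prop hx₁ hx₂ fun h => hx₁p b hb (h ▸ hx₂b)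
  obtain ⟨d, hd, hx₁d, hdx₂⟩ := hH.exists_adj_adj_of_walk (D := {y | y ∈ p.support}) hx₁₂
    (fun h => hp _ h hx₁) (fun h => hp _ h hx₂) hx₁a hx₂b.symm p fun _ => id
  have hda : d = a := by
    rw [Set.mem_ofPred_eq, ← cons_support_tail hnil, List.mem_cons] at hd
    exact hd.resolve_right fun h => hx₁p d h hx₁d
  exact hx₂p d (hda ▸ ha) hdx₂.symm

/-- An induced cycle meeting both `A` and `(A ∪ S)ᶜ` still connects them after deleting the clique
`S` (a cycle minus a clique stays connected), so it uses a deleted edge. -/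
theorem IsChordal.sdiff_fromRel (hH : H.IsChordal) {S A : Set V} (hS : H.IsClique S)
    (hSA : Disjoint S A) : (H \ fromRel fun x y => x ∈ A ∧ y ∉ A ∪ S).IsChordal := by
  set H₁ := H \ fromRel fun x y => x ∈ A ∧ y ∉ A ∪ S
  rw [isChordal_iff_isEmpty_embedding] at hH ⊢
  refine fun n hn => ⟨fun f => ?_⟩
  obtain ⟨m, rfl⟩ : ∃ m, n = m + 2 := ⟨n - 2, by omega⟩
  by_cases hcross : ∃ i j, f i ∈ A ∧ f j ∉ A ∪ S
  · obtain ⟨i, j, hi, hj⟩ := hcross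
    have hS' : (cycleGraph (m + 2)).IsClique (f ⁻¹' S) := fun k hk l hl hkl => by
      refine f.map_rel_iff.mp ⟨hS hk hl (f.injective.ne hkl), fun h => ?_⟩
      rw [fromRel_adj] at h
      rcases h.2 with h | h
      exacts [hSA.notMem_of_mem_left hk h.1, hSA.notMem_of_mem_left hl h.1]
    obtain ⟨p, hp⟩ := cycleGraph_exists_walk_avoiding_clique hS'
      (i := i) (j := j) (fun h => hSA.notMem_of_mem_left h hi) (fun h => hj (Or.inr h))
    obtain ⟨d, hd, hdA, hdA'⟩ := (p.map f.toHom).exists_boundary_dart A hi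
      (fun h => hj (Or.inl h))
    have hdS : d.snd ∉ S := by
      obtain ⟨k, hk, hkd⟩ := List.mem_map.mp
        (by simpa [support_map] using dart_snd_mem_support_of_mem_darts _ hd)
      exact hkd ▸ hp k hk
    exact ((sdiff_adj _ _ _ _).mp d.adj).2
      ((fromRel_adj _ _ _).mpr ⟨d.adj.ne, Or.inl ⟨hdA, by simp [hdA', hdS]⟩⟩)
  · push Not at hcross
    have hH₁ : ∀ i j, H.Adj (f i) (f j) ↔ H₁.Adj (f i) (f j) := fun i j => by
      rw [sdiff_adj, fromRel_adj]
      have := hcross i j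
      have := hcross j i
      tauto
    exact (hH (m + 2) hn).false ⟨f.toEmbedding, fun {i j} => (hH₁ i j).trans f.map_rel_iff⟩

def Touches (G : SimpleGraph V) (A B : Set V) : Prop :=
  ∃ a ∈ A, ∃ b ∈ B, G.Adj a b

def Separated (G : SimpleGraph V) (A B : Set V) : Prop :=
  ∀ a ∈ A, ∀ b ∈ B, a ≠ b ∧ ¬ G.Adj a b

lemma Touches.symm {A B : Set V} (h : G.Touches A B) : G.Touches B A :=
  let ⟨a, ha, b, hb, hab⟩ := h
  ⟨b, hb, a, ha, hab.symm⟩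

lemma Separated.symm {A B : Set V} (h : G.Separated A B) : G.Separated B A :=
  fun b hb a ha => ⟨(h a ha b hb).1.symm, fun h' => (h a ha b hb).2 h'.symm⟩

lemma Separated.disjoint {A B : Set V} (h : G.Separated A B) : Disjoint A B :=
  Set.disjoint_left.mpr fun a ha hb => (h a ha a hb).1 rfl

lemma Separated.not_touches {A B : Set V} (h : G.Separated A B) : ¬ G.Touches A B :=
  fun ⟨a, ha, b, hb, hab⟩ => (h a ha b hb).2 hab

lemma separated_singleton {u v : V} : G.Separated {u} {v} ↔ u ≠ v ∧ ¬ G.Adj u v := by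
  simp [Separated]

lemma induce_singleton_connected (v : V) : (G.induce {v}).Connected :=
  ⟨.of_subsingleton⟩

lemma induce_insert_biUnion_connected {ι : Type*} {v : V} {W : Set ι} {C : ι → Set V}
    (hC : ∀ i ∈ W, (G.induce (C i)).Connected) (hv : ∀ i ∈ W, G.Touches {v} (C i)) :
    (G.induce (insert v (⋃ i ∈ W, C i))).Connected := by
  refine induce_connected_of_patches v (Set.mem_insert _ _) fun {y} hy => ?_
  rcases hy with rfl | hy
  · exact ⟨{y}, by simp, rfl, rfl, Reachable.refl _⟩
  obtain ⟨i, hi, hy⟩ := Set.mem_iUnion₂.mp hy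
  obtain ⟨a, ha, b, hb, hab⟩ := hv i hi
  rw [Set.mem_singleton_iff] at ha
  refine ⟨{v} ∪ C i, ?_, Or.inl rfl, Or.inr hy, ?_⟩
  · exact Set.union_subset (by simp) ((Set.subset_biUnion_of_mem hi).trans (Set.subset_insert _ _))
  · exact (connected_induce_union (induce_singleton_connected v).preconnected
      (hC i hi).preconnected rfl hb (ha ▸ hab)).preconnected _ _

theorem hasInducedMinor_completeBipartiteGraph {α β : Type} {L : α → Set V} {R : β → Set V}
    (hL : ∀ i, (G.induce (L i)).Connected) (hR : ∀ j, (G.induce (R j)).Connected)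
    (hLL : Pairwise fun i i' => G.Separated (L i) (L i'))
    (hRR : Pairwise fun j j' => G.Separated (R j) (R j'))
    (hLR : ∀ i j, Disjoint (L i) (R j) ∧ G.Touches (L i) (R j)) :
    G.HasInducedMinor (completeBipartiteGraph α β) := by
  refine ⟨Sum.elim L R, ?_, ?_, ?_⟩
  · rintro (i | j)
    exacts [hL i, hR j]
  · rintro (i | j) (i' | j') hne
    · exact (hLL (by simpa using hne)).disjoint
    · exact (hLR i j').1
    · exact (hLR i' j).1.symm
    · exact (hRR (by simpa using hne)).disjoint
  · rintro (i | j) (i' | j') hne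
    · exact iff_of_false (by simp) (hLL (by simpa using hne)).not_touches
    · exact iff_of_true (by simp) (hLR i j').2
    · exact iff_of_true (by simp) (hLR i' j).2.symm
    · exact iff_of_false (by simp) (hRR (by simpa using hne)).not_touches

theorem hasInducedMinor_K23 {L₁ L₂ R₁ R₂ R₃ : Set V}
    (hL₁ : (G.induce L₁).Connected) (hL₂ : (G.induce L₂).Connected)
    (hR₁ : (G.induce R₁).Connected) (hR₂ : (G.induce R₂).Connected)
    (hR₃ : (G.induce R₃).Connected) (hL : G.Separated L₁ L₂)
    (hR₁₂ : G.Separated R₁ R₂) (hR₁₃ : G.Separated R₁ R₃) (hR₂₃ : G.Separated R₂ R₃)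
    (hLR : ∀ R ∈ ({R₁, R₂, R₃} : Set (Set V)),
      Disjoint (L₁ ∪ L₂) R ∧ G.Touches L₁ R ∧ G.Touches L₂ R) :
    G.HasInducedMinor (K2q 3) := by
  simp only [Set.mem_insert_iff, Set.mem_singleton_iff, forall_eq_or_imp, forall_eq,
    Set.disjoint_union_left] at hLR
  refine hasInducedMinor_completeBipartiteGraph (L := ![L₁, L₂]) (R := ![R₁, R₂, R₃])
    (fun i => by fin_cases i <;> assumption) (fun j => by fin_cases j <;> assumption)
    (fun i i' h => ?_) (fun j j' h => ?_) (fun i j => ?_)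
  · fin_cases i <;> fin_cases i' <;> simp_all [hL.symm]
  · fin_cases j <;> fin_cases j' <;> simp_all [hR₁₂.symm, hR₁₃.symm, hR₂₃.symm]
  · fin_cases i <;> fin_cases j <;> simp_all

/-- Empty when `w ∈ X`. -/
def componentOutside (G : SimpleGraph V) (X : Set V) (w : V) : Set V :=
  {y | ∃ p : G.Walk w y, ∀ x ∈ p.support, x ∉ X}

variable {X : Set V} {w y z : V}

lemma mem_componentOutside_self (hw : w ∉ X) : w ∈ G.componentOutside X w :=
  ⟨Walk.nil, by simpa⟩

lemma notMem_of_mem_componentOutside (hy : y ∈ G.componentOutside X w) : y ∉ X :=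
  let ⟨p, hp⟩ := hy
  hp y p.end_mem_support

lemma disjoint_componentOutside : Disjoint (G.componentOutside X w) X :=
  Set.disjoint_left.mpr fun _ => notMem_of_mem_componentOutside

lemma mem_componentOutside_of_adj (hy : y ∈ G.componentOutside X w) (hyz : G.Adj y z)
    (hz : z ∉ X) : z ∈ G.componentOutside X w := by
  obtain ⟨p, hp⟩ := hy
  refine ⟨p.concat hyz, fun x hx => ?_⟩
  rw [support_concat, List.mem_append, List.mem_singleton] at hx
  exact hx.elim (hp x) fun h => h ▸ hz

lemma componentOutside_eq_of_mem (hy : y ∈ G.componentOutside X w) :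
    G.componentOutside X y = G.componentOutside X w := by
  obtain ⟨p, hp⟩ := hy
  ext z
  constructor
  · rintro ⟨q, hq⟩
    refine ⟨p.append q, fun x hx => ?_⟩
    rw [mem_support_append_iff] at hx
    exact hx.elim (hp x) (hq x)
  · rintro ⟨q, hq⟩
    refine ⟨p.reverse.append q, fun x hx => ?_⟩
    rw [mem_support_append_iff, support_reverse, List.mem_reverse] at hx
    exact hx.elim (hp x) (hq x)

lemma componentOutside_connected (hw : w ∉ X) :
    (G.induce (G.componentOutside X w)).Connected := by
  classical
  refine induce_connected_of_patches w (mem_componentOutside_self hw) fun {y} hy => ?_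
  obtain ⟨p, hp⟩ := hy
  have hsupp : ∀ x ∈ p.support, x ∈ G.componentOutside X w := fun x hx =>
    ⟨p.takeUntil x hx, fun x' hx' => hp x' (p.support_takeUntil_subset_support hx hx')⟩
  exact ⟨_, subset_rfl, _, _, ⟨p.induce _ hsupp⟩⟩

lemma separated_componentOutside {u w₁ w₂ : V} (h₁ : G.Touches {u} (G.componentOutside X w₁))
    (h₂ : ¬ G.Touches {u} (G.componentOutside X w₂)) :
    G.Separated (G.componentOutside X w₁) (G.componentOutside X w₂) := by
  have hne : ∀ y ∈ G.componentOutside X w₁, y ∉ G.componentOutside X w₂ := fun y hy hy' =>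
    h₂ (by rwa [← componentOutside_eq_of_mem hy', componentOutside_eq_of_mem hy])
  refine fun y hy z hz => ⟨fun h => hne y hy (h ▸ hz), fun hyz => hne z ?_ hz⟩
  exact mem_componentOutside_of_adj hy hyz (notMem_of_mem_componentOutside hz)

lemma separated_singleton_componentOutside {u : V} (hu : u ∈ X)
    (h : ¬ G.Touches {u} (G.componentOutside X w)) : G.Separated {u} (G.componentOutside X w) :=
  fun a ha y hy => ⟨fun hay => notMem_of_mem_componentOutside hy (hay ▸ ha ▸ hu),
    fun hadj => h ⟨a, ha, y, hy, hadj⟩⟩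

lemma exists_adj_componentOutside_of_walk {z : V} (q : G.Walk w z) (hw : w ∉ X) (hz : z ∈ X) :
    ∃ y ∈ G.componentOutside X w, ∃ x ∈ q.support, x ∈ X ∧ G.Adj y x := by
  induction q with
  | nil => exact absurd hz hw
  | @cons w w' z h q ih =>
    by_cases hw' : w' ∈ X
    · exact ⟨w, mem_componentOutside_self hw, w', by simp, hw', h⟩
    obtain ⟨y, hy, x, hx, hxX, hyx⟩ := ih hw' hz
    have hw'C : w' ∈ G.componentOutside X w :=
      mem_componentOutside_of_adj (mem_componentOutside_self hw) h hw'
    exact ⟨y, componentOutside_eq_of_mem hw'C ▸ hy, x, by simp [hx], hxX, hyx⟩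

lemma exists_walk_covering_componentOutside [Finite V] (hw : w ∉ X) :
    ∃ p : G.Walk w w, (∀ y ∈ p.support, y ∉ X) ∧ G.componentOutside X w ⊆ {y | y ∈ p.support} := by
  classical
  suffices h : ∀ T : Finset V, ↑T ⊆ G.componentOutside X w →
      ∃ p : G.Walk w w, (∀ y ∈ p.support, y ∉ X) ∧ ∀ y ∈ T, y ∈ p.support by
    obtain ⟨p, hp, hT⟩ := h (G.componentOutside X w).toFinite.toFinset (by simp)
    exact ⟨p, hp, fun y hy => hT y (by simpa using hy)⟩
  intro T
  induction T using Finset.induction_on with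
  | empty => exact fun _ => ⟨Walk.nil, by simpa, by simp⟩
  | insert t T _ ih =>
    intro hT
    rw [Finset.coe_insert, Set.insert_subset_iff] at hT
    obtain ⟨p, hp, hTp⟩ := ih hT.2
    obtain ⟨q, hq⟩ := hT.1
    refine ⟨q.append (q.reverse.append p), fun x hx => ?_, fun x hx => ?_⟩
    · simp only [mem_support_append_iff, support_reverse, List.mem_reverse] at hx
      exact hx.elim (hq x) fun h => h.elim (hq x) (hp x)
    · rw [Finset.mem_insert] at hx
      rcases hx with rfl | hx
      · exact (q.mem_support_append_iff _).mpr (Or.inl q.end_mem_support)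
      · simp [hTp x hx]

theorem IsChordal.exists_not_touches_componentOutside [Finite V] (hH : H.IsChordal) (hGH : G ≤ H)
    {X : Set V} (hX : Maximal H.IsClique X) {w : V} (hw : w ∉ X) :
    ∃ x ∈ X, ¬ G.Touches {x} (G.componentOutside X w) := by
  obtain ⟨p, hp, hcover⟩ := exists_walk_covering_componentOutside (G := G) hw
  obtain ⟨x, hx, hnadj⟩ := hH.exists_forall_not_adj_of_maximal hX (p.mapLe hGH)
    (by simpa [support_mapLe_eq_support] using hp)
  refine ⟨x, hx, fun ⟨x', hx', y, hy, hxy⟩ => ?_⟩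
  rw [Set.mem_singleton_iff.mp hx'] at hxy
  exact hnadj y (by simpa [support_mapLe_eq_support] using hcover hy) (hGH hxy)

theorem IsMinimalTriangulation.exists_touches_componentOutside
    (hGH : G.IsMinimalTriangulation H) {X : Set V} (hX : H.IsClique X) {u v : V}
    (hu : u ∈ X) (hv : v ∈ X) (huv : u ≠ v) (hnadj : ¬ G.Adj u v) :
    ∃ w ∉ X, G.Touches {u} (G.componentOutside X w) ∧ G.Touches {v} (G.componentOutside X w) := by
  classical
  obtain ⟨hle, hH, hmin⟩ := hGH
  set S := X \ {u, v}
  set A := G.componentOutside S u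
  by_cases hvA : v ∈ A
  · obtain ⟨p, hp⟩ := hvA
    obtain ⟨q, hq, hqS⟩ : ∃ q : G.Walk u v, q.IsPath ∧ ∀ x ∈ q.support, x ∉ S :=
      ⟨p.bypass, p.bypass_isPath, fun x hx => hp x (p.support_bypass_subset_support hx)⟩
    cases q with
    | nil => exact absurd rfl huv
    | @cons _ w _ huw q =>
      have huq : u ∉ q.support := ((cons_isPath_iff _ _).mp hq).2
      have hwX : w ∉ X := fun hw => hqS w (by simp) ⟨hw, by
        rintro (rfl | rfl)
        exacts [huq q.start_mem_support, hnadj huw]⟩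
      obtain ⟨y, hy, x, hx, hxX, hyx⟩ := exists_adj_componentOutside_of_walk q hwX hv
      obtain rfl : x = v := by
        by_contra hxv
        exact hqS x (by simp [hx]) ⟨hxX, by rintro (rfl | rfl) <;> simp_all⟩
      exact ⟨w, hwX, ⟨u, rfl, w, mem_componentOutside_self hwX, huw⟩, ⟨x, rfl, y, hy, hyx.symm⟩⟩
  · -- `S` separates `u` from `v` in `G`, so the edges of `H` from `A` to the far side of `S`
    -- can be removed, contradicting minimality.
    have hSA : Disjoint S A := disjoint_componentOutside.symm
    refine (hmin _ ?_ (hH.sdiff_fromRel (hX.subset Set.sdiff_subset) hSA) ?_).elim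
    · refine fun x y hxy => (sdiff_adj _ _ _ _).mpr ⟨hle hxy, fun h => ?_⟩
      rw [fromRel_adj] at h
      rcases h.2 with ⟨hx, hy⟩ | ⟨hy, hx⟩
      · exact hy (Or.inl (mem_componentOutside_of_adj hx hxy fun h => hy (Or.inr h)))
      · exact hx (Or.inl (mem_componentOutside_of_adj hy hxy.symm fun h => hx (Or.inr h)))
    · refine lt_of_le_of_ne sdiff_le fun h => ?_
      have huv' : H.Adj u v := hX hu hv huv
      rw [← h, sdiff_adj, fromRel_adj] at huv'
      refine huv'.2 ⟨huv, Or.inl ⟨mem_componentOutside_self (by simp [S]), ?_⟩⟩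
      rintro (h | ⟨-, h⟩)
      exacts [hvA h, h (by simp)]

def componentStar (G : SimpleGraph V) (X : Set V) (t : V) (W : Set V) : Set V :=
  insert t (⋃ w ∈ W, G.componentOutside X w)

variable {t : V} {W : Set V}

lemma componentStar_connected
    (hW : ∀ w ∈ W, w ∉ X ∧ G.Touches {t} (G.componentOutside X w)) :
    (G.induce (G.componentStar X t W)).Connected :=
  induce_insert_biUnion_connected (fun w hw => componentOutside_connected (hW w hw).1)
    fun w hw => (hW w hw).2

lemma notMem_componentStar {u : V} (hu : u ∈ X) (hut : u ≠ t) : u ∉ G.componentStar X t W := by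
  rintro (rfl | hu')
  · exact hut rfl
  · obtain ⟨w, -, hu'⟩ := Set.mem_iUnion₂.mp hu'
    exact notMem_of_mem_componentOutside hu' hu

lemma touches_componentStar {u : V} (hw : w ∈ W) (h : G.Touches {u} (G.componentOutside X w)) :
    G.Touches (G.componentStar X t W) {u} :=
  let ⟨a, ha, y, hy, hay⟩ := h
  ⟨y, Or.inr (Set.mem_biUnion hw hy), a, ha, hay.symm⟩

lemma separated_componentOutside_componentStar (ht : t ∈ X)
    (hw : ¬ G.Touches {t} (G.componentOutside X w))
    (hW : ∀ w' ∈ W, G.Touches {t} (G.componentOutside X w')) :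
    G.Separated (G.componentOutside X w) (G.componentStar X t W) := by
  rintro a ha b (rfl | hb)
  · exact (separated_singleton_componentOutside ht hw).symm a ha b rfl
  · obtain ⟨w', hw', hb⟩ := Set.mem_iUnion₂.mp hb
    exact (separated_componentOutside (hW w' hw') hw).symm a ha b hb

lemma separated_componentStar {u v : V} {W' : Set V} (hu : u ∈ X) (hv : v ∈ X)
    (huv : G.Separated {u} {v})
    (hW : ∀ w ∈ W, G.Touches {u} (G.componentOutside X w) ∧
      ¬ G.Touches {v} (G.componentOutside X w))
    (hW' : ∀ w ∈ W', G.Touches {v} (G.componentOutside X w) ∧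
      ¬ G.Touches {u} (G.componentOutside X w)) :
    G.Separated (G.componentStar X u W) (G.componentStar X v W') := by
  rintro a (rfl | ha) b hb
  · rcases hb with rfl | hb
    · exact huv a rfl b rfl
    · obtain ⟨w', hw', hb⟩ := Set.mem_iUnion₂.mp hb
      exact separated_singleton_componentOutside hu (hW' w' hw').2 a rfl b hb
  · obtain ⟨w, hw, ha⟩ := Set.mem_iUnion₂.mp ha
    exact separated_componentOutside_componentStar hv (hW w hw).2 (fun w' hw' => (hW' w' hw').1)
      a ha b hb

lemma IsPotentialMaxClique.exists_maximal (hX : G.IsPotentialMaxClique X) :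
    ∃ H, G.IsMinimalTriangulation H ∧ Maximal H.IsClique X :=
  let ⟨H, hGH, hcl, hmax⟩ := hX
  ⟨H, hGH, hcl, fun Y hY hXY => (hmax Y hY hXY).le⟩

lemma IsPotentialMaxClique.exists_touches_componentOutside (hX : G.IsPotentialMaxClique X)
    {u v : V} (hu : u ∈ X) (hv : v ∈ X) (huv : u ≠ v) (hnadj : ¬ G.Adj u v) :
    ∃ w ∉ X, G.Touches {u} (G.componentOutside X w) ∧ G.Touches {v} (G.componentOutside X w) :=
  let ⟨_, hGH, hmax⟩ := hX.exists_maximal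
  hGH.exists_touches_componentOutside hmax.prop hu hv huv hnadj

lemma IsPotentialMaxClique.exists_not_touches_componentOutside [Finite V]
    (hX : G.IsPotentialMaxClique X) (hw : w ∉ X) :
    ∃ x ∈ X, ¬ G.Touches {x} (G.componentOutside X w) :=
  let ⟨_, hGH, hmax⟩ := hX.exists_maximal
  hGH.2.1.exists_not_touches_componentOutside hGH.1 hmax hw

lemma IsPotentialMaxClique.exists_touches_exactly [Finite V] (hX : G.IsPotentialMaxClique X)
    {I : Set V} (hIX : I ⊆ X) (hI : G.IsIndepSet I)
    (h2 : ∀ w ∉ X, {u ∈ I | G.Touches {u} (G.componentOutside X w)}.ncard ≤ 2)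
    {u v : V} (hu : u ∈ I) (hv : v ∈ I) (huv : u ≠ v) :
    ∃ w ∉ X, G.Touches {u} (G.componentOutside X w) ∧ G.Touches {v} (G.componentOutside X w) ∧
      ∀ t ∈ I, t ≠ u → t ≠ v → ¬ G.Touches {t} (G.componentOutside X w) := by
  obtain ⟨w, hw, huw, hvw⟩ :=
    hX.exists_touches_componentOutside (hIX hu) (hIX hv) huv (hI hu hv huv)
  refine ⟨w, hw, huw, hvw, fun t ht htu htv htw => (h2 w hw).not_gt ?_⟩
  exact (Set.two_lt_ncard_iff (Set.toFinite _)).mpr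
    ⟨u, v, t, ⟨hu, huw⟩, ⟨hv, hvw⟩, ⟨ht, htw⟩, huv, htu.symm, htv.symm⟩

theorem IsPotentialMaxClique.hasInducedMinor_K23_of_two_lt_ncard [Finite V]
    (hX : G.IsPotentialMaxClique X) {I : Set V} (hIX : I ⊆ X) (hI : G.IsIndepSet I)
    (hw : w ∉ X) (h3 : 2 < {u ∈ I | G.Touches {u} (G.componentOutside X w)}.ncard) :
    G.HasInducedMinor (K2q 3) := by
  obtain ⟨u₁, u₂, u₃, hu₁, hu₂, hu₃, h₁₂, h₁₃, h₂₃⟩ := (Set.two_lt_ncard_iff (Set.toFinite _)).mp h3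
  obtain ⟨x, hx, hxC⟩ := hX.exists_not_touches_componentOutside hw
  set C := G.componentOutside X w
  set W := {w' | w' ∉ X ∧ G.Touches {x} (G.componentOutside X w')}
  have hsep : ∀ {u u'}, u ∈ I → u' ∈ I → u ≠ u' → G.Separated {u} {u'} :=
    fun hu hu' h => separated_singleton.mpr ⟨h, hI hu hu' h⟩
  have hLR : ∀ u ∈ {u ∈ I | G.Touches {u} C}, Disjoint (C ∪ G.componentStar X x W) {u} ∧
      G.Touches C {u} ∧ G.Touches (G.componentStar X x W) {u} := by
    rintro u ⟨hu, huC⟩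
    have hxu : x ≠ u := by
      rintro rfl
      exact hxC huC
    refine ⟨Set.disjoint_singleton_right.mpr fun h => h.elim
      (notMem_of_mem_componentOutside · (hIX hu)) (notMem_componentStar (hIX hu) hxu.symm),
      huC.symm, ?_⟩
    by_cases hadj : G.Adj x u
    · exact ⟨x, Set.mem_insert _ _, u, rfl, hadj⟩
    · obtain ⟨w', hw', hxw', huw'⟩ := hX.exists_touches_componentOutside hx (hIX hu) hxu hadj
      exact touches_componentStar ⟨hw', hxw'⟩ huw'
  refine hasInducedMinor_K23 (componentOutside_connected hw) (componentStar_connected fun _ h => h)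
    (induce_singleton_connected u₁) (induce_singleton_connected u₂)
    (induce_singleton_connected u₃) (separated_componentOutside_componentStar hx hxC fun _ h => h.2)
    (hsep hu₁.1 hu₂.1 h₁₂) (hsep hu₁.1 hu₃.1 h₁₃) (hsep hu₂.1 hu₃.1 h₂₃) ?_
  simp only [Set.mem_insert_iff, Set.mem_singleton_iff]
  rintro R (rfl | rfl | rfl)
  exacts [hLR u₁ hu₁, hLR u₂ hu₂, hLR u₃ hu₃]

theorem IsPotentialMaxClique.hasInducedMinor_K23_of_ncard_le_two [Finite V]
    (hX : G.IsPotentialMaxClique X) {a b c d : V} (hIX : {a, b, c, d} ⊆ X)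
    (hI : G.IsIndepSet {a, b, c, d}) (hab : a ≠ b) (hac : a ≠ c) (had : a ≠ d) (hbc : b ≠ c)
    (hbd : b ≠ d) (hcd : c ≠ d)
    (h2 : ∀ w ∉ X,
      {u ∈ ({a, b, c, d} : Set V) | G.Touches {u} (G.componentOutside X w)}.ncard ≤ 2) :
    G.HasInducedMinor (K2q 3) := by
  have hpair := fun {u v} => hX.exists_touches_exactly hIX hI h2 (u := u) (v := v)
  obtain ⟨ha, hb, hc, hd⟩ : a ∈ ({a, b, c, d} : Set V) ∧ b ∈ ({a, b, c, d} : Set V) ∧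
      c ∈ ({a, b, c, d} : Set V) ∧ d ∈ ({a, b, c, d} : Set V) := by simp
  obtain ⟨w₁₂, hw₁₂, ha₁₂, hb₁₂, h₁₂⟩ := hpair ha hb hab
  obtain ⟨w₁₃, hw₁₃, ha₁₃, hc₁₃, h₁₃⟩ := hpair ha hc hac
  obtain ⟨w₂₃, hw₂₃, hb₂₃, hc₂₃, h₂₃⟩ := hpair hb hc hbc
  obtain ⟨w₁₄, hw₁₄, ha₁₄, hd₁₄, h₁₄⟩ := hpair ha hd had
  obtain ⟨w₂₄, hw₂₄, hb₂₄, hd₂₄, h₂₄⟩ := hpair hb hd hbd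
  have hR₂ : ∀ w ∈ ({w₁₃, w₂₃} : Set V), w ∉ X ∧ G.Touches {c} (G.componentOutside X w) ∧
      ¬ G.Touches {d} (G.componentOutside X w) := by
    simp only [Set.mem_insert_iff, Set.mem_singleton_iff]
    rintro w (rfl | rfl)
    exacts [⟨hw₁₃, hc₁₃, h₁₃ d hd had.symm hcd.symm⟩, ⟨hw₂₃, hc₂₃, h₂₃ d hd hbd.symm hcd.symm⟩]
  have hR₃ : ∀ w ∈ ({w₁₄, w₂₄} : Set V), w ∉ X ∧ G.Touches {d} (G.componentOutside X w) ∧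
      ¬ G.Touches {c} (G.componentOutside X w) := by
    simp only [Set.mem_insert_iff, Set.mem_singleton_iff]
    rintro w (rfl | rfl)
    exacts [⟨hw₁₄, hd₁₄, h₁₄ c hc hac.symm hcd⟩, ⟨hw₂₄, hd₂₄, h₂₄ c hc hbc.symm hcd⟩]
  refine hasInducedMinor_K23 (induce_singleton_connected a) (induce_singleton_connected b)
    (componentOutside_connected hw₁₂)
    (componentStar_connected fun w hw => ⟨(hR₂ w hw).1, (hR₂ w hw).2.1⟩)
    (componentStar_connected fun w hw => ⟨(hR₃ w hw).1, (hR₃ w hw).2.1⟩)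
    (separated_singleton.mpr ⟨hab, hI ha hb hab⟩)
    (separated_componentOutside_componentStar (hIX hc) (h₁₂ c hc hac.symm hbc.symm)
      fun w hw => (hR₂ w hw).2.1)
    (separated_componentOutside_componentStar (hIX hd) (h₁₂ d hd had.symm hbd.symm)
      fun w hw => (hR₃ w hw).2.1)
    (separated_componentStar (hIX hc) (hIX hd) (separated_singleton.mpr ⟨hcd, hI hc hd hcd⟩)
      (fun w hw => (hR₂ w hw).2) fun w hw => (hR₃ w hw).2) ?_
  simp only [Set.mem_insert_iff, Set.mem_singleton_iff, Set.disjoint_union_left,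
    Set.disjoint_singleton_left]
  rintro R (rfl | rfl | rfl)
  · exact ⟨⟨fun h => notMem_of_mem_componentOutside h (hIX ha),
      fun h => notMem_of_mem_componentOutside h (hIX hb)⟩, ha₁₂, hb₁₂⟩
  · exact ⟨⟨notMem_componentStar (hIX ha) hac, notMem_componentStar (hIX hb) hbc⟩,
      (touches_componentStar (by simp) ha₁₃).symm, (touches_componentStar (by simp) hb₂₃).symm⟩
  · exact ⟨⟨notMem_componentStar (hIX ha) had, notMem_componentStar (hIX hb) hbd⟩,
      (touches_componentStar (by simp) ha₁₄).symm, (touches_componentStar (by simp) hb₂₄).symm⟩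

theorem IsPotentialMaxClique.card_le_three_of_isIndepSet [Finite V]
    (hG : ¬ G.HasInducedMinor (K2q 3)) (hX : G.IsPotentialMaxClique X) {s : Finset V}
    (hsX : ↑s ⊆ X) (hs : G.IsIndepSet s) : s.card ≤ 3 := by
  classical
  by_contra! h4
  obtain ⟨t, hts, ht⟩ := Finset.exists_subset_card_eq h4
  obtain ⟨a, b, c, d, hab, hac, had, hbc, hbd, hcd, rfl⟩ := Finset.card_eq_four.mp ht
  have hts' : ({a, b, c, d} : Set V) ⊆ s := by simpa using Finset.coe_subset.mpr hts
  by_cases h3 : ∃ w ∉ X,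
      2 < {u ∈ ({a, b, c, d} : Set V) | G.Touches {u} (G.componentOutside X w)}.ncard
  · obtain ⟨w, hw, h3⟩ := h3
    exact hG (hX.hasInducedMinor_K23_of_two_lt_ncard (hts'.trans hsX) (hs.mono hts') hw h3)
  · push Not at h3
    exact hG (hX.hasInducedMinor_K23_of_ncard_le_two (hts'.trans hsX) (hs.mono hts')
      hab hac had hbc hbd hcd h3)

end SimpleGraph

/-- If `G` is `K_{2,3}`-induced-minor-free, then `α_pmc(G) ≤ 3`. -/
theorem pmcIndepNum_le_three_of_k23_inducedMinorFree
    {V : Type} [Fintype V] (G : SimpleGraph V)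
    (hG : ¬ G.HasInducedMinor (K2q 3)) :
    G.pmcIndepNum ≤ 3 := by
  refine csSup_le' ?_
  rintro _ ⟨X, hX, rfl⟩
  refine csSup_le' ?_
  rintro _ ⟨s, hsX, hs, rfl⟩
  exact hX.card_le_three_of_isIndepSet hG hsX fun u hu v hv huv => hs u hu v hv huv
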